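/- Let 0 < k < 1, k' = √(1 − k²), l' = √(1 − l²) where l = (1 − k')/(1 + k'), and M = 1/(1 + k'). Then K(k') = M K(l'), where K is the complete elliptic integral of the first kind. -/

import Mathlib

/-!
The substitution `s = (1 + k) t / (1 + k t²)` maps `[0, 1]` bijectively onto itself, and with
`l = 2√k / (1 + k)` it turns `(1 - l² s²)(1 - s²)` into `(ds/dt / (1 + k))² (1 - k² t²)(1 - t²)`.
Hence `K(l) = (1 + k) K(k)` (the ascending Landen transformation), by the change of variables
formula for injective maps, which needs no integrability and so also covers the improper integral.
For `k' = √(1 - k²)` one has `√(1 - ((1 - k')/(1 + k'))²) = 2√k' / (1 + k')`, which gives the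
complementary form.
-/

/-- The complete elliptic integral of the first kind. -/
noncomputable def ellipticK (l : ℝ) : ℝ :=
  ∫ t in (0:ℝ)..1, 1 / Real.sqrt ((1 - l ^ 2 * t ^ 2) * (1 - t ^ 2))

open Real MeasureTheory Set

noncomputable def ellipticKIntegrand (l t : ℝ) : ℝ :=
  1 / √((1 - l ^ 2 * t ^ 2) * (1 - t ^ 2))

lemma ellipticK_eq_integral_Icc (l : ℝ) :
    ellipticK l = ∫ t in Icc 0 1, ellipticKIntegrand l t := by
  rw [integral_Icc_eq_integral_Ioc, ← intervalIntegral.integral_of_le zero_le_one]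
  rfl

noncomputable def landenMap (k t : ℝ) : ℝ := (1 + k) * t / (1 + k * t ^ 2)

section LandenMap

variable {k : ℝ}

lemma hasDerivAt_landenMap (hk : 0 ≤ k) (t : ℝ) :
    HasDerivAt (landenMap k) ((1 + k) * (1 - k * t ^ 2) / (1 + k * t ^ 2) ^ 2) t := by
  have hden : HasDerivAt (fun t : ℝ => 1 + k * t ^ 2) (k * (2 * t)) t := by
    simpa using ((hasDerivAt_pow 2 t).const_mul k).const_add 1
  have hnum : HasDerivAt (fun t : ℝ => (1 + k) * t) (1 + k) t := by
    simpa using (hasDerivAt_id t).const_mul (1 + k)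
  exact (hnum.div hden (by positivity)).congr_deriv (by ring)

lemma injOn_landenMap (hk0 : 0 ≤ k) (hk1 : k < 1) : InjOn (landenMap k) (Icc 0 1) := by
  rintro a ⟨ha0, ha1⟩ b ⟨hb0, hb1⟩ hab
  have hka : 0 < 1 + k * a ^ 2 := by positivity
  have hkb : 0 < 1 + k * b ^ 2 := by positivity
  have hkab : k * (a * b) < 1 :=
    (mul_le_of_le_one_right hk0 (mul_le_one₀ ha1 hb0 hb1)).trans_lt hk1
  have hfactor : (a - b) * ((1 + k) * (1 - k * (a * b))) = 0 := by
    unfold landenMap at hab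
    rw [div_eq_div_iff hka.ne' hkb.ne'] at hab
    linear_combination hab
  exact sub_eq_zero.mp ((mul_eq_zero.mp hfactor).resolve_right
    (mul_pos (by positivity) (sub_pos.mpr hkab)).ne')

lemma landenMap_image_Icc (hk0 : 0 ≤ k) (hk1 : k ≤ 1) :
    landenMap k '' Icc 0 1 = Icc 0 1 := by
  apply Subset.antisymm
  · rintro _ ⟨t, ⟨ht0, ht1⟩, rfl⟩
    have hden : 0 < 1 + k * t ^ 2 := by positivity
    refine ⟨by unfold landenMap; positivity, ?_⟩
    rw [landenMap, div_le_one hden]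
    nlinarith [mul_nonneg (sub_nonneg.mpr ht1) (by nlinarith : 0 ≤ 1 - k * t)]
  · have hcont : ContinuousOn (landenMap k) (Icc 0 1) :=
      fun t _ => (hasDerivAt_landenMap hk0 t).continuousAt.continuousWithinAt
    have h0 : landenMap k 0 = 0 := by simp [landenMap]
    have h1 : landenMap k 1 = 1 := by
      rw [landenMap, one_pow, mul_one, mul_one, div_self (by positivity)]
    simpa [h0, h1] using intermediate_value_Icc zero_le_one hcont

end LandenMap

lemma landen_radicand {k : ℝ} (hk : 0 ≤ k) (t : ℝ) :
    (1 - (2 * √k / (1 + k)) ^ 2 * landenMap k t ^ 2) * (1 - landenMap k t ^ 2)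
      = ((1 - k * t ^ 2) / (1 + k * t ^ 2) ^ 2) ^ 2 * ((1 - k ^ 2 * t ^ 2) * (1 - t ^ 2)) := by
  have : 0 < 1 + k * t ^ 2 := by positivity
  have : 0 < 1 + k := by positivity
  rw [landenMap, div_pow, mul_pow, sq_sqrt hk]
  field_simp
  ring

lemma abs_deriv_mul_ellipticKIntegrand_landenMap {k t : ℝ} (hk : 0 ≤ k) (ht : k * t ^ 2 < 1) :
    |(1 + k) * (1 - k * t ^ 2) / (1 + k * t ^ 2) ^ 2|
        * ellipticKIntegrand (2 * √k / (1 + k)) (landenMap k t)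
      = (1 + k) * ellipticKIntegrand k t := by
  have hc : 0 < (1 - k * t ^ 2) / (1 + k * t ^ 2) ^ 2 := by
    apply div_pos <;> nlinarith [sq_nonneg t]
  rw [ellipticKIntegrand, landen_radicand hk, sqrt_mul (sq_nonneg _), sqrt_sq hc.le,
    mul_div_assoc, abs_of_pos (by positivity), ellipticKIntegrand, mul_assoc, mul_one_div,
    div_mul_cancel_left₀ hc.ne', one_div]

theorem ellipticK_two_mul_sqrt_div_one_add {k : ℝ} (hk0 : 0 ≤ k) (hk1 : k < 1) :
    ellipticK (2 * √k / (1 + k)) = (1 + k) * ellipticK k := by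
  have hjacobian := integral_image_eq_integral_abs_deriv_smul measurableSet_Icc
    (fun t _ => (hasDerivAt_landenMap hk0 t).hasDerivWithinAt) (injOn_landenMap hk0 hk1)
    (ellipticKIntegrand (2 * √k / (1 + k)))
  rw [landenMap_image_Icc hk0 hk1.le] at hjacobian
  rw [ellipticK_eq_integral_Icc, ellipticK_eq_integral_Icc, hjacobian, ← integral_const_mul]
  refine setIntegral_congr_fun measurableSet_Icc fun t ht => ?_
  exact abs_deriv_mul_ellipticKIntegrand_landenMap hk0 <|
    (mul_le_of_le_one_right hk0 (pow_le_one₀ ht.1 ht.2)).trans_lt hk1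

theorem landen_K_complementary_general (k : ℝ) (hk0 : 0 < k) :
    ellipticK (Real.sqrt (1 - k ^ 2))
      = (1 / (1 + Real.sqrt (1 - k ^ 2)))
        * ellipticK (Real.sqrt
            (1 - ((1 - Real.sqrt (1 - k ^ 2)) / (1 + Real.sqrt (1 - k ^ 2))) ^ 2)) := by
  set x := √(1 - k ^ 2)
  have hx0 : 0 ≤ x := sqrt_nonneg _
  have hx1 : x < 1 := (sqrt_lt' one_pos).2 (by nlinarith)
  have harg : √(1 - ((1 - x) / (1 + x)) ^ 2) = 2 * √x / (1 + x) := by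
    rw [← sqrt_sq (by positivity : 0 ≤ 2 * √x / (1 + x)), div_pow, div_pow, mul_pow, sq_sqrt hx0]
    congr 1
    field_simp
    ring
  rw [harg, ellipticK_two_mul_sqrt_div_one_add hx0 hx1]
  field_simp

/-- **Landen's transformation** (complementary half): for `0 < k < 1`, with
`k' = √(1 − k²)`, `l = (1 − k')/(1 + k')`, `l' = √(1 − l²)` and
`M = 1/(1 + k')`, one has `K(k') = M K(l')`. -/
theorem landen_K_complementary (k : ℝ) (hk0 : 0 < k) (hk1 : k < 1) :
    ellipticK (Real.sqrt (1 - k ^ 2))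
      = (1 / (1 + Real.sqrt (1 - k ^ 2)))
        * ellipticK (Real.sqrt
            (1 - ((1 - Real.sqrt (1 - k ^ 2)) / (1 + Real.sqrt (1 - k ^ 2))) ^ 2)) :=
  landen_K_complementary_general k hk0
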